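/- arXiv:1711.03611 — 6 statements merged into one kernel-verified Lean document; each statement's English description precedes it below -/
import Mathlib

section
/- Under consistency, conditional independence Z(a*) ⊥ A | C, and cross-world independence Y(a,z) ⊥ Z(a*) | A=a, C=c, with positive densities, the counterfactual mean E[Y(A, Z(a*))] equals the generalized front-door functional Ψ = Σ_{z,c} Pr(Z=z | A=a*, C=c) · Σ_a E[Y | A=a, Z=z, C=c] Pr(A=a | C=c) Pr(C=c). -/
open Finset
open scoped Classical BigOperators

noncomputable section

namespace FrontDoor

/-- Probability of an event under pmf `p` on a finite sample space. -/
def pr {Ω : Type*} [Fintype Ω] (p : Ω → ℝ) (E : Ω → Prop) : ℝ :=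
  ∑ ω, if E ω then p ω else 0

/-- Expectation of `X` under pmf `p`. -/
def ex {Ω : Type*} [Fintype Ω] (p : Ω → ℝ) (X : Ω → ℝ) : ℝ :=
  ∑ ω, p ω * X ω

/-- Conditional expectation `E[X | E]`. -/
def cex {Ω : Type*} [Fintype Ω] (p : Ω → ℝ) (X : Ω → ℝ) (E : Ω → Prop) : ℝ :=
  (∑ ω, if E ω then p ω * X ω else 0) / pr p E

/-- Conditional probability `Pr(E | F)`. -/
def cpr {Ω : Type*} [Fintype Ω] (p : Ω → ℝ) (E F : Ω → Prop) : ℝ :=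
  pr p (fun ω => E ω ∧ F ω) / pr p F

end FrontDoor

open FrontDoor

/-!
Split `E[Y(A, Z(a*))]` over the cells `{A = a, Z(a*) = z, C = c}`, on which the integrand is
`Y(a, z)`. Cross-world independence (M3 with `a' = a*`) factors a cell's contribution as
`E[Y(a,z); A = a, C = c] · Pr(Z(a*) = z | A = a, C = c)`. M3 with `a' = a` and consistency give
`E[Y(a,z) | A = a, C = c] = E[Y(a,z) | A = a, Z(a) = z, C = c] = E[Y | A = a, Z = z, C = c]`;
M2, applied at `a` and at `a*`, and consistency give
`Pr(Z(a*) = z | A = a, C = c) = Pr(Z(a*) = z | C = c) = Pr(Z = z | A = a*, C = c)`.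
-/

namespace FrontDoor

variable {Ω : Type*} [Fintype Ω] (p : Ω → ℝ)

def exOn (X : Ω → ℝ) (E : Ω → Prop) : ℝ :=
  ∑ ω, if E ω then p ω * X ω else 0

lemma cex_eq_exOn_div (X : Ω → ℝ) (E : Ω → Prop) : cex p X E = exOn p X E / pr p E := rfl

lemma pr_congr_ae {E F : Ω → Prop} (h : ∀ ω, p ω ≠ 0 → (E ω ↔ F ω)) :
    pr p E = pr p F := by
  refine Finset.sum_congr rfl fun ω _ => ?_
  by_cases hp : p ω = 0
  · simp [hp]
  · simp [h ω hp]

lemma exOn_congr_ae {X X' : Ω → ℝ} {E F : Ω → Prop}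
    (h : ∀ ω, p ω ≠ 0 → (E ω ↔ F ω) ∧ (F ω → X ω = X' ω)) :
    exOn p X E = exOn p X' F := by
  refine Finset.sum_congr rfl fun ω _ => ?_
  by_cases hp : p ω = 0
  · simp [hp]
  · obtain ⟨hEF, hX⟩ := h ω hp
    by_cases hF : F ω <;> simp [hEF, hF, hX]

lemma cex_congr_ae {X X' : Ω → ℝ} {E F : Ω → Prop}
    (h : ∀ ω, p ω ≠ 0 → (E ω ↔ F ω) ∧ (F ω → X ω = X' ω)) :
    cex p X E = cex p X' F := by
  rw [cex_eq_exOn_div, cex_eq_exOn_div, exOn_congr_ae p h, pr_congr_ae p fun ω hp => (h ω hp).1]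

lemma cpr_congr_ae {E E' F : Ω → Prop} (h : ∀ ω, p ω ≠ 0 → F ω → (E ω ↔ E' ω)) :
    cpr p E F = cpr p E' F := by
  rw [cpr, cpr, pr_congr_ae p fun ω hp => and_congr_left (h ω hp)]

lemma pr_eq_sum_fiber {β : Type*} [Fintype β] (V : Ω → β) (E : Ω → Prop) :
    pr p E = ∑ b, pr p (fun ω => V ω = b ∧ E ω) := by
  rw [pr, ← Finset.sum_fiberwise Finset.univ V]
  simp only [pr, Finset.sum_filter]
  refine Finset.sum_congr rfl fun b _ => Finset.sum_congr rfl fun ω _ => ?_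
  split_ifs <;> simp_all

lemma ex_eq_sum_exOn_fiber {β : Type*} [Fintype β] (V : Ω → β) (X : Ω → ℝ) :
    ex p X = ∑ b, exOn p X (fun ω => V ω = b) := by
  rw [ex, ← Finset.sum_fiberwise Finset.univ V]
  simp only [exOn, Finset.sum_filter]

lemma pr_and_eq_cpr_mul {B E : Ω → Prop} (hE : pr p E ≠ 0) :
    pr p (fun ω => B ω ∧ E ω) = cpr p B E * pr p E :=
  (div_mul_cancel₀ _ hE).symm

lemma exOn_eq_cex_mul {X : Ω → ℝ} {E : Ω → Prop} (hE : pr p E ≠ 0) :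
    exOn p X E = cex p X E * pr p E :=
  (div_mul_cancel₀ _ hE).symm

lemma cpr_ne_zero_of_pr_and_ne_zero {B E : Ω → Prop} (hE : pr p E ≠ 0)
    (hBE : pr p (fun ω => B ω ∧ E ω) ≠ 0) : cpr p B E ≠ 0 := by
  rintro h
  rw [pr_and_eq_cpr_mul p hE, h, zero_mul] at hBE
  exact hBE rfl

lemma exOn_eq_sum_mul_pr (X : Ω → ℝ) (E : Ω → Prop) :
    exOn p X E = ∑ y ∈ Finset.univ.image X, y * pr p (fun ω => X ω = y ∧ E ω) := by
  simp only [exOn, pr, Finset.mul_sum, mul_ite, mul_zero, ite_and]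
  rw [Finset.sum_comm]
  refine Finset.sum_congr rfl fun ω _ => ?_
  rw [Finset.sum_ite_eq, if_pos (Finset.mem_image_of_mem X (Finset.mem_univ ω))]
  split_ifs <;> ring

lemma exOn_and_of_indep {X : Ω → ℝ} {B E : Ω → Prop} (hE : pr p E ≠ 0)
    (h : ∀ y : ℝ,
      cpr p (fun ω => X ω = y ∧ B ω) E = cpr p (fun ω => X ω = y) E * cpr p B E) :
    exOn p X (fun ω => B ω ∧ E ω) = exOn p X E * cpr p B E := by
  rw [exOn_eq_sum_mul_pr, exOn_eq_sum_mul_pr, Finset.sum_mul]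
  refine Finset.sum_congr rfl fun y _ => ?_
  have hassoc :
      pr p (fun ω => X ω = y ∧ B ω ∧ E ω) = pr p (fun ω => (X ω = y ∧ B ω) ∧ E ω) :=
    pr_congr_ae p fun ω _ => and_assoc.symm
  rw [hassoc, pr_and_eq_cpr_mul p hE, h y, pr_and_eq_cpr_mul p hE]
  ring

lemma cex_and_of_indep {X : Ω → ℝ} {B E : Ω → Prop} (hE : pr p E ≠ 0)
    (hBE : pr p (fun ω => B ω ∧ E ω) ≠ 0)
    (h : ∀ y : ℝ,
      cpr p (fun ω => X ω = y ∧ B ω) E = cpr p (fun ω => X ω = y) E * cpr p B E) :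
    cex p X (fun ω => B ω ∧ E ω) = cex p X E := by
  have hB := cpr_ne_zero_of_pr_and_ne_zero p hE hBE
  rw [cex_eq_exOn_div, cex_eq_exOn_div, exOn_and_of_indep p hE h, pr_and_eq_cpr_mul p hE]
  field_simp

lemma cpr_and_of_indep {B D E : Ω → Prop} (hE : pr p E ≠ 0)
    (hDE : pr p (fun ω => D ω ∧ E ω) ≠ 0)
    (h : cpr p (fun ω => B ω ∧ D ω) E = cpr p B E * cpr p D E) :
    cpr p B (fun ω => D ω ∧ E ω) = cpr p B E := by
  have hD := cpr_ne_zero_of_pr_and_ne_zero p hE hDE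
  have hassoc : pr p (fun ω => B ω ∧ D ω ∧ E ω) = pr p (fun ω => (B ω ∧ D ω) ∧ E ω) :=
    pr_congr_ae p fun ω _ => and_assoc.symm
  rw [cpr, hassoc, pr_and_eq_cpr_mul p hE, pr_and_eq_cpr_mul p hE, h]
  field_simp

section Model

variable {α ζ γ : Type*}
  (A : Ω → α) (Z : Ω → ζ) (Y : Ω → ℝ) (C : Ω → γ) (Zc : α → Ω → ζ) (Yc : α → ζ → Ω → ℝ)

lemma ex_eq_sum_exOn_cells [Fintype α] [Fintype ζ] [Fintype γ] (W : Ω → ζ) :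
    ex p (fun ω => Yc (A ω) (W ω) ω)
      = ∑ a, ∑ z, ∑ c, exOn p (Yc a z) (fun ω => W ω = z ∧ A ω = a ∧ C ω = c) := by
  rw [ex_eq_sum_exOn_fiber p (fun ω => (A ω, W ω, C ω))]
  simp only [Fintype.sum_prod_type, Prod.ext_iff]
  refine Finset.sum_congr rfl fun a _ => Finset.sum_congr rfl fun z _ =>
    Finset.sum_congr rfl fun c _ => exOn_congr_ae p fun ω _ => ⟨and_left_comm, ?_⟩
  rintro ⟨rfl, rfl, -⟩
  rfl

lemma cex_eq_cex_counterfactual (a : α) (z : ζ) (c : γ)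
    (hconsZ : ∀ ω, p ω ≠ 0 → Zc (A ω) ω = Z ω)
    (hconsY : ∀ ω, p ω ≠ 0 → Yc (A ω) (Z ω) ω = Y ω)
    (hM3 : ∀ y : ℝ,
      cpr p (fun ω => Yc a z ω = y ∧ Zc a ω = z) (fun ω => A ω = a ∧ C ω = c)
        = cpr p (fun ω => Yc a z ω = y) (fun ω => A ω = a ∧ C ω = c)
          * cpr p (fun ω => Zc a ω = z) (fun ω => A ω = a ∧ C ω = c))
    (hAC : pr p (fun ω => A ω = a ∧ C ω = c) ≠ 0)
    (hAZC : pr p (fun ω => A ω = a ∧ Z ω = z ∧ C ω = c) ≠ 0) :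
    cex p Y (fun ω => A ω = a ∧ Z ω = z ∧ C ω = c)
      = cex p (Yc a z) (fun ω => A ω = a ∧ C ω = c) := by
  have hcell : ∀ ω, p ω ≠ 0 →
      ((A ω = a ∧ Z ω = z ∧ C ω = c) ↔ (Zc a ω = z ∧ A ω = a ∧ C ω = c)) ∧
        (Zc a ω = z ∧ A ω = a ∧ C ω = c → Y ω = Yc a z ω) := by
    intro ω hp
    rw [← hconsY ω hp, ← hconsZ ω hp]
    constructor
    · constructor
      · rintro ⟨rfl, hz, hc⟩; exact ⟨hz, rfl, hc⟩
      · rintro ⟨hz, rfl, hc⟩; exact ⟨rfl, hz, hc⟩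
    · rintro ⟨hz, rfl, -⟩; rw [hz]
  rw [cex_congr_ae p hcell]
  have hZAC : pr p (fun ω => Zc a ω = z ∧ A ω = a ∧ C ω = c) ≠ 0 :=
    (pr_congr_ae p fun ω hp => (hcell ω hp).1).symm.trans_ne hAZC
  exact cex_and_of_indep p hAC hZAC hM3

lemma cpr_counterfactual_mediator_eq (astar a : α) (z : ζ) (c : γ)
    (hconsZ : ∀ ω, p ω ≠ 0 → Zc (A ω) ω = Z ω)
    (hM2 : ∀ a' : α,
      cpr p (fun ω => Zc astar ω = z ∧ A ω = a') (fun ω => C ω = c)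
        = cpr p (fun ω => Zc astar ω = z) (fun ω => C ω = c)
          * cpr p (fun ω => A ω = a') (fun ω => C ω = c))
    (hAC : ∀ a' : α, pr p (fun ω => A ω = a' ∧ C ω = c) ≠ 0)
    (hC : pr p (fun ω => C ω = c) ≠ 0) :
    cpr p (fun ω => Zc astar ω = z) (fun ω => A ω = a ∧ C ω = c)
      = cpr p (fun ω => Z ω = z) (fun ω => A ω = astar ∧ C ω = c) := by
  rw [cpr_and_of_indep p hC (hAC a) (hM2 a),
    ← cpr_and_of_indep p hC (hAC astar) (hM2 astar)]
  exact cpr_congr_ae p fun ω hp hF => by rw [← hF.1, hconsZ ω hp]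

end Model

end FrontDoor

theorem piie_identification_general
    {Ω α ζ γ : Type*} [Fintype Ω] [Fintype α] [Fintype ζ] [Fintype γ]
    (p : Ω → ℝ)
    (A : Ω → α) (Z : Ω → ζ) (Y : Ω → ℝ) (C : Ω → γ)
    (Zc : α → Ω → ζ) (Yc : α → ζ → Ω → ℝ) (astar : α)
    -- M1: consistency (almost surely)
    (hconsZ : ∀ ω, p ω ≠ 0 → Zc (A ω) ω = Z ω)
    (hconsY : ∀ ω, p ω ≠ 0 → Yc (A ω) (Z ω) ω = Y ω)
    -- M2: Z(a') ⊥ A | C for all a', c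
    (hM2 : ∀ (a' : α) (z : ζ) (a : α) (c : γ),
      cpr p (fun ω => Zc a' ω = z ∧ A ω = a) (fun ω => C ω = c)
        = cpr p (fun ω => Zc a' ω = z) (fun ω => C ω = c)
          * cpr p (fun ω => A ω = a) (fun ω => C ω = c))
    -- M3: Y(a,z) ⊥ Z(a') | A = a, C = c for all z, a, a', c
    (hM3 : ∀ (a a' : α) (z z' : ζ) (c : γ) (y : ℝ),
      cpr p (fun ω => Yc a z ω = y ∧ Zc a' ω = z') (fun ω => A ω = a ∧ C ω = c)
        = cpr p (fun ω => Yc a z ω = y) (fun ω => A ω = a ∧ C ω = c)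
          * cpr p (fun ω => Zc a' ω = z') (fun ω => A ω = a ∧ C ω = c))
    -- positivity (P1 and P2)
    (hposAC : ∀ (a : α) (c : γ), 0 < pr p (fun ω => A ω = a ∧ C ω = c))
    (hposZAC : ∀ (a : α) (z : ζ) (c : γ),
      0 < pr p (fun ω => A ω = a ∧ Z ω = z ∧ C ω = c)) :
    ex p (fun ω => Yc (A ω) (Zc astar ω) ω)
      = ∑ z : ζ, ∑ c : γ,
          cpr p (fun ω => Z ω = z) (fun ω => A ω = astar ∧ C ω = c)
            * ∑ a : α,
                cex p Y (fun ω => A ω = a ∧ Z ω = z ∧ C ω = c)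
                  * cpr p (fun ω => A ω = a) (fun ω => C ω = c)
                  * pr p (fun ω => C ω = c) := by
  have hAC : ∀ a c, pr p (fun ω => A ω = a ∧ C ω = c) ≠ 0 := fun a c => (hposAC a c).ne'
  have hC : ∀ c, pr p (fun ω => C ω = c) ≠ 0 := fun c => by
    rw [pr_eq_sum_fiber p A]
    exact (Finset.sum_pos (fun a _ => hposAC a c) ⟨astar, Finset.mem_univ _⟩).ne'
  have hcell : ∀ a z c,
      exOn p (Yc a z) (fun ω => Zc astar ω = z ∧ A ω = a ∧ C ω = c)
        = cpr p (fun ω => Z ω = z) (fun ω => A ω = astar ∧ C ω = c)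
          * (cex p Y (fun ω => A ω = a ∧ Z ω = z ∧ C ω = c)
            * cpr p (fun ω => A ω = a) (fun ω => C ω = c) * pr p (fun ω => C ω = c)) := by
    intro a z c
    rw [exOn_and_of_indep p (hAC a c) (hM3 a astar z z c), exOn_eq_cex_mul p (hAC a c),
      ← cex_eq_cex_counterfactual p A Z Y C Zc Yc a z c hconsZ hconsY (hM3 a a z z c) (hAC a c)
        (hposZAC a z c).ne',
      cpr_counterfactual_mediator_eq p A Z C Zc astar a z c hconsZ (fun a' => hM2 astar z a' c)
        (hAC · c) (hC c),
      pr_and_eq_cpr_mul p (hC c)]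
    ring
  rw [ex_eq_sum_exOn_cells p A C Yc]
  simp only [hcell, Finset.mul_sum]
  rw [Finset.sum_comm]
  exact Finset.sum_congr rfl fun z _ => Finset.sum_comm

/-- Under consistency (M1), `Z(a*) ⊥ A | C` (M2), the cross-world
independence `Y(a,z) ⊥ Z(a*) | A = a, C = c` (M3), and positivity, the
counterfactual mean `E[Y(A, Z(a*))]` equals the generalized front-door functional
`Ψ = Σ_{z,c} Pr(Z=z | A=a*, C=c) Σ_a E[Y | A=a, Z=z, C=c] Pr(A=a | C=c) Pr(C=c)`. -/
theorem piie_identification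
    {Ω α ζ γ : Type*} [Fintype Ω] [Fintype α] [Fintype ζ] [Fintype γ]
    (p : Ω → ℝ) (hp0 : ∀ ω, 0 ≤ p ω) (hp1 : ∑ ω, p ω = 1)
    (A : Ω → α) (Z : Ω → ζ) (Y : Ω → ℝ) (C : Ω → γ)
    (Zc : α → Ω → ζ) (Yc : α → ζ → Ω → ℝ) (astar : α)
    -- M1: consistency (almost surely)
    (hconsZ : ∀ ω, p ω ≠ 0 → Zc (A ω) ω = Z ω)
    (hconsY : ∀ ω, p ω ≠ 0 → Yc (A ω) (Z ω) ω = Y ω)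
    -- M2: Z(a') ⊥ A | C for all a', c
    (hM2 : ∀ (a' : α) (z : ζ) (a : α) (c : γ),
      cpr p (fun ω => Zc a' ω = z ∧ A ω = a) (fun ω => C ω = c)
        = cpr p (fun ω => Zc a' ω = z) (fun ω => C ω = c)
          * cpr p (fun ω => A ω = a) (fun ω => C ω = c))
    -- M3: Y(a,z) ⊥ Z(a') | A = a, C = c for all z, a, a', c
    (hM3 : ∀ (a a' : α) (z z' : ζ) (c : γ) (y : ℝ),
      cpr p (fun ω => Yc a z ω = y ∧ Zc a' ω = z') (fun ω => A ω = a ∧ C ω = c)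
        = cpr p (fun ω => Yc a z ω = y) (fun ω => A ω = a ∧ C ω = c)
          * cpr p (fun ω => Zc a' ω = z') (fun ω => A ω = a ∧ C ω = c))
    -- positivity (P1 and P2)
    (hposAC : ∀ (a : α) (c : γ), 0 < pr p (fun ω => A ω = a ∧ C ω = c))
    (hposZAC : ∀ (a : α) (z : ζ) (c : γ),
      0 < pr p (fun ω => A ω = a ∧ Z ω = z ∧ C ω = c)) :
    ex p (fun ω => Yc (A ω) (Zc astar ω) ω)
      = ∑ z : ζ, ∑ c : γ,
          cpr p (fun ω => Z ω = z) (fun ω => A ω = astar ∧ C ω = c)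
            * ∑ a : α,
                cex p Y (fun ω => A ω = a ∧ Z ω = z ∧ C ω = c)
                  * cpr p (fun ω => A ω = a) (fun ω => C ω = c)
                  * pr p (fun ω => C ω = c) :=
  piie_identification_general p A Z Y C Zc Yc astar hconsZ hconsY hM2 hM3 hposAC hposZAC
end
end

section
/- The inverse-probability-of-mediator weighted functional equals the front-door functional: E[ Y · f(Z | a*, C) / f(Z | A, C) ] = Σ_{z,c} Pr(Z=z | A=a*, C=c) · Σ_a E[Y | A=a, Z=z, C=c] Pr(A=a | C=c) Pr(C=c), where f denotes the true conditional density of Z given (A,C). -/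
open Finset
open scoped Classical BigOperators

noncomputable section

open FrontDoor

lemma pr_congr' {Ω : Type*} [Fintype Ω] (p : Ω → ℝ) {E F : Ω → Prop}
    (h : ∀ ω, E ω ↔ F ω) : pr p E = pr p F := by
  unfold pr
  exact Finset.sum_congr rfl fun ω _ => by simp [h ω]

lemma pr_mono' {Ω : Type*} [Fintype Ω] (p : Ω → ℝ) (hp0 : ∀ ω, 0 ≤ p ω)
    {E F : Ω → Prop} (h : ∀ ω, E ω → F ω) : pr p E ≤ pr p F := by
  unfold pr
  apply Finset.sum_le_sum
  intro ω _
  by_cases hE : E ω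
  · simp [hE, h ω hE]
  · by_cases hF : F ω <;> simp [hE, hF, hp0 ω]

/-- The inverse-probability-of-mediator weighted functional equals the
front-door functional: `E[Y · f(Z|a*,C)/f(Z|A,C)]
= Σ_{z,c} Pr(Z=z|A=a*,C=c) Σ_a E[Y|A=a,Z=z,C=c] Pr(A=a|C=c) Pr(C=c)`,
where `f` is the true conditional density of `Z` given `(A,C)`. -/
theorem ipw_mediator_eq_frontdoor
    {Ω α ζ γ : Type*} [Fintype Ω] [Fintype α] [Fintype ζ] [Fintype γ]
    (p : Ω → ℝ) (hp0 : ∀ ω, 0 ≤ p ω) (hp1 : ∑ ω, p ω = 1)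
    (A : Ω → α) (Z : Ω → ζ) (Y : Ω → ℝ) (C : Ω → γ) (astar : α)
    -- positivity (P1): f(z|a,c) > 0, with all conditioning events of positive mass
    (hposAC : ∀ (a : α) (c : γ), 0 < pr p (fun ω => A ω = a ∧ C ω = c))
    (hposZAC : ∀ (a : α) (z : ζ) (c : γ),
      0 < pr p (fun ω => A ω = a ∧ Z ω = z ∧ C ω = c)) :
    ex p (fun ω =>
        Y ω * cpr p (fun ω' => Z ω' = Z ω) (fun ω' => A ω' = astar ∧ C ω' = C ω)
          / cpr p (fun ω' => Z ω' = Z ω) (fun ω' => A ω' = A ω ∧ C ω' = C ω))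
      = ∑ z : ζ, ∑ c : γ,
          cpr p (fun ω => Z ω = z) (fun ω => A ω = astar ∧ C ω = c)
            * ∑ a : α,
                cex p Y (fun ω => A ω = a ∧ Z ω = z ∧ C ω = c)
                  * cpr p (fun ω => A ω = a) (fun ω => C ω = c)
                  * pr p (fun ω => C ω = c) := by
  classical
  set Q : ζ → α → γ → ℝ := fun z a c =>
    cpr p (fun ω => Z ω = z) (fun ω => A ω = a ∧ C ω = c) with hQ
  -- fiberwise decomposition of a sum over Ω
  have key : ∀ g : Ω → ℝ, ∑ ω, g ω
      = ∑ z : ζ, ∑ c : γ, ∑ a : α, ∑ ω,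
          if A ω = a ∧ Z ω = z ∧ C ω = c then g ω else 0 := by
    intro g
    have h1 : ∀ ω : Ω, g ω = ∑ z : ζ, ∑ c : γ, ∑ a : α,
        if A ω = a ∧ Z ω = z ∧ C ω = c then g ω else 0 := by
      intro ω
      simp [ite_and, Finset.sum_ite_eq]
    calc ∑ ω, g ω = ∑ ω, ∑ z : ζ, ∑ c : γ, ∑ a : α,
        if A ω = a ∧ Z ω = z ∧ C ω = c then g ω else 0 :=
          Finset.sum_congr rfl fun ω _ => h1 ω
      _ = _ := by
          rw [Finset.sum_comm]
          refine Finset.sum_congr rfl fun z _ => ?_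
          rw [Finset.sum_comm]
          refine Finset.sum_congr rfl fun c _ => ?_
          rw [Finset.sum_comm]
  unfold ex
  rw [key]
  refine Finset.sum_congr rfl fun z _ => ?_
  refine Finset.sum_congr rfl fun c _ => ?_
  rw [Finset.mul_sum]
  refine Finset.sum_congr rfl fun a _ => ?_
  -- abbreviations
  set S : ℝ := ∑ ω, if A ω = a ∧ Z ω = z ∧ C ω = c then p ω * Y ω else 0 with hS
  set Pazc : ℝ := pr p (fun ω => A ω = a ∧ Z ω = z ∧ C ω = c) with hPazc
  set Pac : ℝ := pr p (fun ω => A ω = a ∧ C ω = c) with hPac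
  set Pc : ℝ := pr p (fun ω => C ω = c) with hPc
  have hPazc0 : Pazc ≠ 0 := ne_of_gt (hposZAC a z c)
  have hPac0 : Pac ≠ 0 := ne_of_gt (hposAC a c)
  have hPc0 : Pc ≠ 0 := by
    have := pr_mono' p hp0 (E := fun ω => A ω = a ∧ C ω = c)
      (F := fun ω => C ω = c) (fun ω h => h.2)
    exact ne_of_gt (lt_of_lt_of_le (hposAC a c) this)
  -- LHS of the per-(z,c,a) identity
  have hL : (∑ ω, if A ω = a ∧ Z ω = z ∧ C ω = c then
      p ω * (Y ω * cpr p (fun ω' => Z ω' = Z ω) (fun ω' => A ω' = astar ∧ C ω' = C ω)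
        / cpr p (fun ω' => Z ω' = Z ω) (fun ω' => A ω' = A ω ∧ C ω' = C ω)) else 0)
      = S * (Q z astar c / Q z a c) := by
    rw [hS, Finset.sum_mul]
    refine Finset.sum_congr rfl fun ω _ => ?_
    split_ifs with h
    · obtain ⟨ha, hz, hc⟩ := h
      rw [ha, hz, hc, hQ]
      ring
    · simp
  rw [hL]
  -- evaluate the defined quantities
  have hQac : Q z a c = Pazc / Pac := by
    rw [hQ]
    simp only [cpr]
    rw [pr_congr' p (F := fun ω => A ω = a ∧ Z ω = z ∧ C ω = c) (fun ω => by tauto)]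
  have hcex : cex p Y (fun ω => A ω = a ∧ Z ω = z ∧ C ω = c) = S / Pazc := by simp only [cex, hS, hPazc]; congr 1; exact Finset.sum_congr rfl fun ω _ => by by_cases h : A ω = a ∧ Z ω = z ∧ C ω = c <;> simp [h]
  have hcprA : cpr p (fun ω => A ω = a) (fun ω => C ω = c) = Pac / Pc := by simp only [cpr, hPac, hPc]
  rw [hcex, hcprA, hQac]
  field_simp
  ring
end
end

section
/- The inverse-probability-of-exposure weighted regression functional equals the front-door functional: E[ (I(A=a*)/f(a*|C)) · Σ_a E[Y | A=a, Z, C] f(a | C) ] = Σ_{z,c} f(z | a*, c) Σ_a E[Y | a, z, c] f(a | c) Pr(C=c) = Ψ. -/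
open Finset
open scoped Classical BigOperators

noncomputable section

open FrontDoor

/-- The inverse-probability-of-exposure weighted regression functional
equals the front-door functional:
`E[(I(A=a*)/f(a*|C)) · Σ_a E[Y|A=a,Z,C] f(a|C)]
= Σ_{z,c} f(z|a*,c) Σ_a E[Y|a,z,c] f(a|c) Pr(C=c)`. -/
theorem ipw_exposure_eq_frontdoor
    {Ω α ζ γ : Type*} [Fintype Ω] [Fintype α] [Fintype ζ] [Fintype γ]
    (p : Ω → ℝ) (hp0 : ∀ ω, 0 ≤ p ω) (hp1 : ∑ ω, p ω = 1)
    (A : Ω → α) (Z : Ω → ζ) (Y : Ω → ℝ) (C : Ω → γ) (astar : α)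
    -- positivity (P2), with all conditioning events of positive mass
    (hposAC : ∀ (a : α) (c : γ), 0 < pr p (fun ω => A ω = a ∧ C ω = c))
    (hposZAC : ∀ (a : α) (z : ζ) (c : γ),
      0 < pr p (fun ω => A ω = a ∧ Z ω = z ∧ C ω = c)) :
    ex p (fun ω =>
        (if A ω = astar then (1 : ℝ) else 0)
            / cpr p (fun ω' => A ω' = astar) (fun ω' => C ω' = C ω)
          * ∑ a : α,
              cex p Y (fun ω' => A ω' = a ∧ Z ω' = Z ω ∧ C ω' = C ω)
                * cpr p (fun ω' => A ω' = a) (fun ω' => C ω' = C ω))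
      = ∑ z : ζ, ∑ c : γ,
          cpr p (fun ω => Z ω = z) (fun ω => A ω = astar ∧ C ω = c)
            * ∑ a : α,
                cex p Y (fun ω => A ω = a ∧ Z ω = z ∧ C ω = c)
                  * cpr p (fun ω => A ω = a) (fun ω => C ω = c)
                  * pr p (fun ω => C ω = c) := by
  classical
  set g : ζ → γ → ℝ := fun z c => ∑ a : α,
      cex p Y (fun ω => A ω = a ∧ Z ω = z ∧ C ω = c) *
        cpr p (fun ω => A ω = a) (fun ω => C ω = c) with hg
  have hC : ∀ c, 0 < pr p (fun ω => C ω = c) := fun c =>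
    lt_of_lt_of_le (hposAC astar c) (pr_mono' p hp0 fun ω h => h.2)
  have key : ex p (fun ω =>
        (if A ω = astar then (1 : ℝ) else 0)
            / cpr p (fun ω' => A ω' = astar) (fun ω' => C ω' = C ω)
          * ∑ a : α,
              cex p Y (fun ω' => A ω' = a ∧ Z ω' = Z ω ∧ C ω' = C ω)
                * cpr p (fun ω' => A ω' = a) (fun ω' => C ω' = C ω))
      = ∑ x : ζ × γ,
          pr p (fun ω => A ω = astar ∧ Z ω = x.1 ∧ C ω = x.2)
            / cpr p (fun ω => A ω = astar) (fun ω => C ω = x.2) * g x.1 x.2 := by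
    unfold ex pr
    conv_rhs => simp only [Finset.sum_div, Finset.sum_mul]
    rw [Finset.sum_comm]
    refine Finset.sum_congr rfl fun ω _ => ?_
    rw [Finset.sum_eq_single ((Z ω, C ω) : ζ × γ)]
    · by_cases ha : A ω = astar <;> simp [ha] <;> ring
    · rintro ⟨z, c⟩ - hne
      have : ¬ (A ω = astar ∧ Z ω = z ∧ C ω = c) := by
        rintro ⟨-, h2, h3⟩; exact hne (by simp [h2, h3])
      simp [this]
    · intro h; exact absurd (Finset.mem_univ _) h
  rw [key, Fintype.sum_prod_type]
  refine Finset.sum_congr rfl fun z _ => Finset.sum_congr rfl fun c _ => ?_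
  have h1 : pr p (fun ω => A ω = astar ∧ Z ω = z ∧ C ω = c)
      = pr p (fun ω => Z ω = z ∧ A ω = astar ∧ C ω = c) :=
    pr_congr' p fun ω => by tauto
  have h2 : (∑ a : α,
      cex p Y (fun ω => A ω = a ∧ Z ω = z ∧ C ω = c)
        * cpr p (fun ω => A ω = a) (fun ω => C ω = c)
        * pr p (fun ω => C ω = c)) = g z c * pr p (fun ω => C ω = c) := by
    rw [hg, Finset.sum_mul]
  rw [h2, cpr, cpr, h1]
  have hac := (hposAC astar c).ne'
  have hc := (hC c).ne'
  field_simp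
end
end

section
/- The doubly robust front-door estimating functional has mean Ψ when the mediator density model is correct, regardless of the outcome mean and exposure models: if b(a,z,c) and g(a|c) are arbitrary functions (with g(·|c) a probability mass function, g(a*|c)>0) and f(z|a,c) is the true mediator density, then E[ (Y − b(A,Z,C))·f(Z|a*,C)/f(Z|A,C) + (I(A=a*)/g(a*|C))·(Σ_a b(a,Z,C)g(a|C) − Σ_{a,z̄} b(a,z̄,C) f(z̄|A,C) g(a|C)) + Σ_z b(A,z,C) f(z|a*,C) ] = Ψ, where Ψ = Σ_{z,c} f(z|a*,c) Σ_a E[Y|a,z,c] f(a|c) Pr(C=c). -/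
open Finset
open scoped Classical BigOperators

noncomputable section

open FrontDoor

namespace DRAux

set_option linter.unusedSectionVars false

variable {Ω α ζ γ : Type*} [Fintype Ω] [Fintype α] [Fintype ζ] [Fintype γ]

lemma collapse (A : Ω → α) (Z : Ω → ζ) (C : Ω → γ) (ω : Ω) (v : α → ζ → γ → ℝ) :
    ∑ c : γ, ∑ a : α, ∑ z : ζ,
      (if A ω = a ∧ Z ω = z ∧ C ω = c then v a z c else 0)
      = v (A ω) (Z ω) (C ω) := by
  have h1 : ∀ c a, (∑ z : ζ, if A ω = a ∧ Z ω = z ∧ C ω = c then v a z c else 0)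
      = if A ω = a ∧ C ω = c then v a (Z ω) c else 0 := by
    intro c a
    by_cases h : A ω = a ∧ C ω = c
    · obtain ⟨ha, hc⟩ := h
      simp [ha, hc, Finset.sum_ite_eq]
    · rw [if_neg h]
      apply Finset.sum_eq_zero
      intro z _
      rw [if_neg]
      tauto
  simp only [h1]
  have h2 : ∀ c, (∑ a : α, if A ω = a ∧ C ω = c then v a (Z ω) c else 0)
      = if C ω = c then v (A ω) (Z ω) c else 0 := by
    intro c
    by_cases hc : C ω = c
    · simp [hc, Finset.sum_ite_eq]
    · rw [if_neg hc]
      apply Finset.sum_eq_zero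
      intro a _
      rw [if_neg]
      tauto
  simp only [h2]
  simp [Finset.sum_ite_eq]

lemma group3 (A : Ω → α) (Z : Ω → ζ) (C : Ω → γ) (G : Ω → ℝ) (F : α → ζ → γ → ℝ) :
    ∑ ω, G ω * F (A ω) (Z ω) (C ω)
      = ∑ c : γ, ∑ a : α, ∑ z : ζ,
          (∑ ω, if A ω = a ∧ Z ω = z ∧ C ω = c then G ω else 0) * F a z c := by
  have h1 : ∀ (c : γ) (a : α) (z : ζ),
      (∑ ω, if A ω = a ∧ Z ω = z ∧ C ω = c then G ω else 0) * F a z c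
        = ∑ ω, if A ω = a ∧ Z ω = z ∧ C ω = c then G ω * F a z c else 0 := by
    intro c a z
    rw [Finset.sum_mul]
    exact Finset.sum_congr rfl fun ω _ => by split <;> simp
  calc ∑ ω, G ω * F (A ω) (Z ω) (C ω)
      = ∑ ω, ∑ c : γ, ∑ a : α, ∑ z : ζ,
          (if A ω = a ∧ Z ω = z ∧ C ω = c then G ω * F a z c else 0) :=
        Finset.sum_congr rfl fun ω _ =>
          (collapse A Z C ω (fun a z c => G ω * F a z c)).symm
    _ = ∑ c : γ, ∑ ω, ∑ a : α, ∑ z : ζ,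
          (if A ω = a ∧ Z ω = z ∧ C ω = c then G ω * F a z c else 0) :=
        Finset.sum_comm
    _ = ∑ c : γ, ∑ a : α, ∑ ω, ∑ z : ζ,
          (if A ω = a ∧ Z ω = z ∧ C ω = c then G ω * F a z c else 0) :=
        Finset.sum_congr rfl fun c _ => Finset.sum_comm
    _ = ∑ c : γ, ∑ a : α, ∑ z : ζ, ∑ ω,
          (if A ω = a ∧ Z ω = z ∧ C ω = c then G ω * F a z c else 0) :=
        Finset.sum_congr rfl fun c _ => Finset.sum_congr rfl fun a _ => Finset.sum_comm
    _ = ∑ c : γ, ∑ a : α, ∑ z : ζ,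
          (∑ ω, if A ω = a ∧ Z ω = z ∧ C ω = c then G ω else 0) * F a z c :=
        Finset.sum_congr rfl fun c _ => Finset.sum_congr rfl fun a _ =>
          Finset.sum_congr rfl fun z _ => (h1 c a z).symm

lemma core {α ζ γ : Type*} [Fintype α] [Fintype ζ] [Fintype γ]
    (P PY : α → ζ → γ → ℝ) (R : α → γ → ℝ) (S : γ → ℝ)
    (b : α → ζ → γ → ℝ) (g : α → γ → ℝ) (astar : α)
    (hP0 : ∀ a z c, P a z c ≠ 0) (hR0 : ∀ a c, R a c ≠ 0) (hS0 : ∀ c, S c ≠ 0)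
    (hRz : ∀ a c, ∑ z : ζ, P a z c = R a c) :
    ∑ c : γ, ∑ a : α, ∑ z : ζ,
      (PY a z c * (P astar z c / R astar c / (P a z c / R a c))
        + P a z c *
          (-(b a z c * (P astar z c / R astar c / (P a z c / R a c)))
            + (if a = astar then (1:ℝ) else 0) / g astar c *
                ((∑ a' : α, b a' z c * g a' c)
                  - ∑ a' : α, ∑ zb : ζ, b a' zb c * (P a zb c / R a c) * g a' c)
            + ∑ z' : ζ, b a z' c * (P astar z' c / R astar c)))
      = ∑ z : ζ, ∑ c : γ, P astar z c / R astar c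
          * ∑ a : α, PY a z c / P a z c * (R a c / S c) * S c := by
  have hrhs : (∑ z : ζ, ∑ c : γ, P astar z c / R astar c
        * ∑ a : α, PY a z c / P a z c * (R a c / S c) * S c)
      = ∑ c : γ, ∑ a : α, ∑ z : ζ, P astar z c / R astar c
          * (PY a z c / P a z c * (R a c / S c) * S c) := by
    simp only [Finset.mul_sum]
    rw [Finset.sum_comm]
    exact Finset.sum_congr rfl fun c _ => Finset.sum_comm
  rw [hrhs]
  refine Finset.sum_congr rfl fun c _ => Finset.sum_congr rfl fun a _ => ?_
  have h1 : ∑ z : ζ, P a z c * (b a z c * (P astar z c / R astar c / (P a z c / R a c)))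
      = ∑ z : ζ, b a z c * (P astar z c / R astar c) * R a c :=
    Finset.sum_congr rfl fun z _ => by
      field_simp [hP0 a z c, hR0 a c, hR0 astar c]
  have h3 : ∑ z : ζ, P a z c * (∑ z' : ζ, b a z' c * (P astar z' c / R astar c))
      = ∑ z : ζ, b a z c * (P astar z c / R astar c) * R a c := by
    rw [← Finset.sum_mul, hRz a c, Finset.mul_sum]
    exact Finset.sum_congr rfl fun z _ => by ring
  have h2 : ∑ z : ζ, P a z c * ((if a = astar then (1:ℝ) else 0) / g astar c *
      ((∑ a' : α, b a' z c * g a' c)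
        - ∑ a' : α, ∑ zb : ζ, b a' zb c * (P a zb c / R a c) * g a' c)) = 0 := by
    by_cases ha : a = astar
    · subst ha
      rw [if_pos rfl]
      have hPU : ∑ z : ζ, P a z c * (∑ a' : α, b a' z c * g a' c)
          = R a c * ∑ a' : α, ∑ zb : ζ, b a' zb c * (P a zb c / R a c) * g a' c := by
        calc ∑ z : ζ, P a z c * (∑ a' : α, b a' z c * g a' c)
            = ∑ z : ζ, ∑ a' : α, P a z c * (b a' z c * g a' c) :=
              Finset.sum_congr rfl fun z _ => by rw [Finset.mul_sum]
          _ = ∑ a' : α, ∑ z : ζ, P a z c * (b a' z c * g a' c) := Finset.sum_comm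
          _ = R a c * ∑ a' : α, ∑ zb : ζ, b a' zb c * (P a zb c / R a c) * g a' c := by
              rw [Finset.mul_sum]
              refine Finset.sum_congr rfl fun a' _ => ?_
              rw [Finset.mul_sum]
              refine Finset.sum_congr rfl fun z _ => ?_
              field_simp [hR0 a c]
      have hstep : ∀ z : ζ, P a z c * ((1:ℝ) / g a c *
          ((∑ a' : α, b a' z c * g a' c)
            - ∑ a' : α, ∑ zb : ζ, b a' zb c * (P a zb c / R a c) * g a' c))
          = (1 / g a c) * (P a z c * (∑ a' : α, b a' z c * g a' c)
              - P a z c * ∑ a' : α, ∑ zb : ζ, b a' zb c * (P a zb c / R a c) * g a' c) :=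
        fun z => by ring
      calc ∑ z : ζ, P a z c * ((1:ℝ) / g a c *
            ((∑ a' : α, b a' z c * g a' c)
              - ∑ a' : α, ∑ zb : ζ, b a' zb c * (P a zb c / R a c) * g a' c))
          = (1 / g a c) * ∑ z : ζ, (P a z c * (∑ a' : α, b a' z c * g a' c)
              - P a z c * ∑ a' : α, ∑ zb : ζ, b a' zb c * (P a zb c / R a c) * g a' c) := by
            rw [Finset.mul_sum]
            exact Finset.sum_congr rfl fun z _ => hstep z
        _ = (1 / g a c) * ((∑ z : ζ, P a z c * (∑ a' : α, b a' z c * g a' c))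
              - (∑ z : ζ, P a z c) *
                  ∑ a' : α, ∑ zb : ζ, b a' zb c * (P a zb c / R a c) * g a' c) := by
            rw [Finset.sum_sub_distrib, Finset.sum_mul]
        _ = 0 := by rw [hPU, hRz a c, sub_self, mul_zero]
    · simp [ha]
  simp only [mul_add, mul_neg, Finset.sum_add_distrib, Finset.sum_neg_distrib]
  rw [h1, h2, h3]
  rw [add_zero, neg_add_cancel, add_zero]
  refine Finset.sum_congr rfl fun z _ => ?_
  field_simp [hP0 a z c, hR0 a c, hR0 astar c, hS0 c]

end DRAux

open DRAux

/-- The doubly robust front-door estimating functional has mean `Ψ`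
when the mediator density model is correct, regardless of the working outcome
regression `b` and working exposure density `g`. -/
theorem dr_frontdoor_mediator_correct
    {Ω α ζ γ : Type*} [Fintype Ω] [Fintype α] [Fintype ζ] [Fintype γ]
    (p : Ω → ℝ) (hp0 : ∀ ω, 0 ≤ p ω) (hp1 : ∑ ω, p ω = 1)
    (A : Ω → α) (Z : Ω → ζ) (Y : Ω → ℝ) (C : Ω → γ) (astar : α)
    -- arbitrary working outcome regression b(a,z,c)
    (b : α → ζ → γ → ℝ)
    -- arbitrary working exposure density g(a|c), positive and summing to one
    (g : α → γ → ℝ) (hg : ∀ a c, 0 < g a c) (hg1 : ∀ c, ∑ a : α, g a c = 1)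
    -- positivity of the true densities
    (hposAC : ∀ (a : α) (c : γ), 0 < pr p (fun ω => A ω = a ∧ C ω = c))
    (hposZAC : ∀ (a : α) (z : ζ) (c : γ),
      0 < pr p (fun ω => A ω = a ∧ Z ω = z ∧ C ω = c)) :
    ex p (fun ω =>
        (Y ω - b (A ω) (Z ω) (C ω))
            * cpr p (fun ω' => Z ω' = Z ω) (fun ω' => A ω' = astar ∧ C ω' = C ω)
            / cpr p (fun ω' => Z ω' = Z ω) (fun ω' => A ω' = A ω ∧ C ω' = C ω)
        + (if A ω = astar then (1 : ℝ) else 0) / g astar (C ω)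
            * ((∑ a : α, b a (Z ω) (C ω) * g a (C ω))
               - ∑ a : α, ∑ zb : ζ,
                   b a zb (C ω)
                     * cpr p (fun ω' => Z ω' = zb) (fun ω' => A ω' = A ω ∧ C ω' = C ω)
                     * g a (C ω))
        + ∑ z : ζ,
            b (A ω) z (C ω)
              * cpr p (fun ω' => Z ω' = z) (fun ω' => A ω' = astar ∧ C ω' = C ω))
      = ∑ z : ζ, ∑ c : γ,
          cpr p (fun ω => Z ω = z) (fun ω => A ω = astar ∧ C ω = c)
            * ∑ a : α,
                cex p Y (fun ω => A ω = a ∧ Z ω = z ∧ C ω = c)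
                  * cpr p (fun ω => A ω = a) (fun ω => C ω = c)
                  * pr p (fun ω => C ω = c) := by
  classical
  -- bridging equations (normalize events and Decidable instances)
  have hcprZ : ∀ (z : ζ) (a : α) (c : γ),
      cpr p (fun ω' => Z ω' = z) (fun ω' => A ω' = a ∧ C ω' = c)
        = (∑ ω, if A ω = a ∧ Z ω = z ∧ C ω = c then p ω else 0)
          / (∑ ω, if A ω = a ∧ C ω = c then p ω else 0) := by
    intro z a c
    have hnum : pr p (fun ω => Z ω = z ∧ A ω = a ∧ C ω = c)
        = ∑ ω, if A ω = a ∧ Z ω = z ∧ C ω = c then p ω else 0 := by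
      rw [pr]
      refine Finset.sum_congr rfl fun ω _ => ?_
      by_cases h1 : A ω = a <;> by_cases h2 : Z ω = z <;> by_cases h3 : C ω = c <;>
        simp [h1, h2, h3]
    have hden : pr p (fun ω => A ω = a ∧ C ω = c)
        = ∑ ω, if A ω = a ∧ C ω = c then p ω else 0 := by
      rw [pr]
      refine Finset.sum_congr rfl fun ω _ => ?_
      by_cases h1 : A ω = a <;> by_cases h3 : C ω = c <;> simp [h1, h3]
    rw [cpr, hnum, hden]
  have hcprA : ∀ (a : α) (c : γ),
      cpr p (fun ω => A ω = a) (fun ω => C ω = c)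
        = (∑ ω, if A ω = a ∧ C ω = c then p ω else 0)
          / (∑ ω, if C ω = c then p ω else 0) := by
    intro a c
    have hnum : pr p (fun ω => A ω = a ∧ C ω = c)
        = ∑ ω, if A ω = a ∧ C ω = c then p ω else 0 := by
      rw [pr]
      refine Finset.sum_congr rfl fun ω _ => ?_
      by_cases h1 : A ω = a <;> by_cases h3 : C ω = c <;> simp [h1, h3]
    have hden : pr p (fun ω => C ω = c) = ∑ ω, if C ω = c then p ω else 0 := by
      rw [pr]
    rw [cpr, hnum, hden]
  have hcex : ∀ (a : α) (z : ζ) (c : γ),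
      cex p Y (fun ω => A ω = a ∧ Z ω = z ∧ C ω = c)
        = (∑ ω, if A ω = a ∧ Z ω = z ∧ C ω = c then p ω * Y ω else 0)
          / (∑ ω, if A ω = a ∧ Z ω = z ∧ C ω = c then p ω else 0) := by
    intro a z c
    have hnum : (∑ ω, if A ω = a ∧ Z ω = z ∧ C ω = c then p ω * Y ω else 0)
        = ∑ ω, if A ω = a ∧ Z ω = z ∧ C ω = c then p ω * Y ω else 0 := rfl
    have hden : pr p (fun ω => A ω = a ∧ Z ω = z ∧ C ω = c)
        = ∑ ω, if A ω = a ∧ Z ω = z ∧ C ω = c then p ω else 0 := by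
      rw [pr]
      refine Finset.sum_congr rfl fun ω _ => ?_
      by_cases h : A ω = a ∧ Z ω = z ∧ C ω = c <;> simp [h]
    rw [cex, hden]
    refine congrArg (· / _) (Finset.sum_congr rfl fun ω _ => ?_)
    by_cases h : A ω = a ∧ Z ω = z ∧ C ω = c <;> simp [h]
  have hprC : ∀ (c : γ), pr p (fun ω => C ω = c)
      = ∑ ω, if C ω = c then p ω else 0 := by
    intro c
    rw [pr]
  -- partition lemmas
  have hRz : ∀ (a : α) (c : γ),
      ∑ z : ζ, (∑ ω, if A ω = a ∧ Z ω = z ∧ C ω = c then p ω else 0)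
        = ∑ ω, if A ω = a ∧ C ω = c then p ω else 0 := by
    intro a c
    rw [Finset.sum_comm]
    refine Finset.sum_congr rfl fun ω _ => ?_
    by_cases h1 : A ω = a <;> by_cases h2 : C ω = c <;>
      simp [h1, h2, Finset.sum_ite_eq]
  have hSa : ∀ (c : γ),
      ∑ a : α, (∑ ω, if A ω = a ∧ C ω = c then p ω else 0)
        = ∑ ω, if C ω = c then p ω else 0 := by
    intro c
    rw [Finset.sum_comm]
    refine Finset.sum_congr rfl fun ω _ => ?_
    by_cases h2 : C ω = c <;> simp [h2, Finset.sum_ite_eq]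
  -- nonemptiness
  have hΩne : (Finset.univ : Finset Ω).Nonempty := by
    by_contra h
    rw [Finset.not_nonempty_iff_eq_empty] at h
    rw [h, Finset.sum_empty] at hp1
    exact absurd hp1 (by norm_num)
  obtain ⟨ω0, -⟩ := hΩne
  have hαne : (Finset.univ : Finset α).Nonempty := ⟨A ω0, Finset.mem_univ _⟩
  -- nonvanishing
  have hP0 : ∀ (a : α) (z : ζ) (c : γ),
      (∑ ω, if A ω = a ∧ Z ω = z ∧ C ω = c then p ω else 0) ≠ 0 := by
    intro a z c
    refine ne_of_gt (lt_of_lt_of_eq (hposZAC a z c) ?_)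
    rw [pr]
    refine Finset.sum_congr rfl fun ω _ => ?_
    by_cases h : A ω = a ∧ Z ω = z ∧ C ω = c <;> simp [h]
  have hR0 : ∀ (a : α) (c : γ),
      (∑ ω, if A ω = a ∧ C ω = c then p ω else 0) ≠ 0 := by
    intro a c
    refine ne_of_gt (lt_of_lt_of_eq (hposAC a c) ?_)
    rw [pr]
    refine Finset.sum_congr rfl fun ω _ => ?_
    by_cases h : A ω = a ∧ C ω = c <;> simp [h]
  have hS0 : ∀ (c : γ), (∑ ω, if C ω = c then p ω else 0) ≠ 0 := by
    intro c
    have h : 0 < ∑ a : α, ∑ ω, if A ω = a ∧ C ω = c then p ω else 0 := by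
      refine Finset.sum_pos (fun a _ => ?_) hαne
      refine lt_of_lt_of_eq (hposAC a c) ?_
      rw [pr]
      refine Finset.sum_congr rfl fun ω _ => ?_
      by_cases h : A ω = a ∧ C ω = c <;> simp [h]
    rw [hSa c] at h
    exact ne_of_gt h
  calc ex p (fun ω =>
        (Y ω - b (A ω) (Z ω) (C ω))
            * cpr p (fun ω' => Z ω' = Z ω) (fun ω' => A ω' = astar ∧ C ω' = C ω)
            / cpr p (fun ω' => Z ω' = Z ω) (fun ω' => A ω' = A ω ∧ C ω' = C ω)
        + (if A ω = astar then (1 : ℝ) else 0) / g astar (C ω)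
            * ((∑ a : α, b a (Z ω) (C ω) * g a (C ω))
               - ∑ a : α, ∑ zb : ζ,
                   b a zb (C ω)
                     * cpr p (fun ω' => Z ω' = zb) (fun ω' => A ω' = A ω ∧ C ω' = C ω)
                     * g a (C ω))
        + ∑ z : ζ,
            b (A ω) z (C ω)
              * cpr p (fun ω' => Z ω' = z) (fun ω' => A ω' = astar ∧ C ω' = C ω))
      = ∑ ω, ((p ω * Y ω) *
          ((∑ ω', if A ω' = astar ∧ Z ω' = Z ω ∧ C ω' = C ω then p ω' else 0)
              / (∑ ω', if A ω' = astar ∧ C ω' = C ω then p ω' else 0)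
            / ((∑ ω', if A ω' = A ω ∧ Z ω' = Z ω ∧ C ω' = C ω then p ω' else 0)
              / (∑ ω', if A ω' = A ω ∧ C ω' = C ω then p ω' else 0)))
        + p ω *
          (-(b (A ω) (Z ω) (C ω) *
              ((∑ ω', if A ω' = astar ∧ Z ω' = Z ω ∧ C ω' = C ω then p ω' else 0)
                / (∑ ω', if A ω' = astar ∧ C ω' = C ω then p ω' else 0)
              / ((∑ ω', if A ω' = A ω ∧ Z ω' = Z ω ∧ C ω' = C ω then p ω' else 0)
                / (∑ ω', if A ω' = A ω ∧ C ω' = C ω then p ω' else 0))))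
            + (if A ω = astar then (1:ℝ) else 0) / g astar (C ω) *
                ((∑ a' : α, b a' (Z ω) (C ω) * g a' (C ω))
                  - ∑ a' : α, ∑ zb : ζ, b a' zb (C ω) *
                      ((∑ ω', if A ω' = A ω ∧ Z ω' = zb ∧ C ω' = C ω then p ω' else 0)
                        / (∑ ω', if A ω' = A ω ∧ C ω' = C ω then p ω' else 0)) * g a' (C ω))
            + ∑ z' : ζ, b (A ω) z' (C ω) *
                ((∑ ω', if A ω' = astar ∧ Z ω' = z' ∧ C ω' = C ω then p ω' else 0)
                  / (∑ ω', if A ω' = astar ∧ C ω' = C ω then p ω' else 0)))) := by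
        simp only [ex]
        refine Finset.sum_congr rfl fun ω _ => ?_
        simp only [hcprZ]
        ring
    _ = (∑ ω, (p ω * Y ω) *
          ((∑ ω', if A ω' = astar ∧ Z ω' = Z ω ∧ C ω' = C ω then p ω' else 0)
              / (∑ ω', if A ω' = astar ∧ C ω' = C ω then p ω' else 0)
            / ((∑ ω', if A ω' = A ω ∧ Z ω' = Z ω ∧ C ω' = C ω then p ω' else 0)
              / (∑ ω', if A ω' = A ω ∧ C ω' = C ω then p ω' else 0))))
        + ∑ ω, p ω *
          (-(b (A ω) (Z ω) (C ω) *
              ((∑ ω', if A ω' = astar ∧ Z ω' = Z ω ∧ C ω' = C ω then p ω' else 0)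
                / (∑ ω', if A ω' = astar ∧ C ω' = C ω then p ω' else 0)
              / ((∑ ω', if A ω' = A ω ∧ Z ω' = Z ω ∧ C ω' = C ω then p ω' else 0)
                / (∑ ω', if A ω' = A ω ∧ C ω' = C ω then p ω' else 0))))
            + (if A ω = astar then (1:ℝ) else 0) / g astar (C ω) *
                ((∑ a' : α, b a' (Z ω) (C ω) * g a' (C ω))
                  - ∑ a' : α, ∑ zb : ζ, b a' zb (C ω) *
                      ((∑ ω', if A ω' = A ω ∧ Z ω' = zb ∧ C ω' = C ω then p ω' else 0)
                        / (∑ ω', if A ω' = A ω ∧ C ω' = C ω then p ω' else 0)) * g a' (C ω))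
            + ∑ z' : ζ, b (A ω) z' (C ω) *
                ((∑ ω', if A ω' = astar ∧ Z ω' = z' ∧ C ω' = C ω then p ω' else 0)
                  / (∑ ω', if A ω' = astar ∧ C ω' = C ω then p ω' else 0))) :=
        Finset.sum_add_distrib
    _ = (∑ c : γ, ∑ a : α, ∑ z : ζ,
          (∑ ω, if A ω = a ∧ Z ω = z ∧ C ω = c then p ω * Y ω else 0) *
            ((∑ ω', if A ω' = astar ∧ Z ω' = z ∧ C ω' = c then p ω' else 0)
                / (∑ ω', if A ω' = astar ∧ C ω' = c then p ω' else 0)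
              / ((∑ ω', if A ω' = a ∧ Z ω' = z ∧ C ω' = c then p ω' else 0)
                / (∑ ω', if A ω' = a ∧ C ω' = c then p ω' else 0))))
        + ∑ c : γ, ∑ a : α, ∑ z : ζ,
          (∑ ω, if A ω = a ∧ Z ω = z ∧ C ω = c then p ω else 0) *
            (-(b a z c *
                ((∑ ω', if A ω' = astar ∧ Z ω' = z ∧ C ω' = c then p ω' else 0)
                  / (∑ ω', if A ω' = astar ∧ C ω' = c then p ω' else 0)
                / ((∑ ω', if A ω' = a ∧ Z ω' = z ∧ C ω' = c then p ω' else 0)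
                  / (∑ ω', if A ω' = a ∧ C ω' = c then p ω' else 0))))
              + (if a = astar then (1:ℝ) else 0) / g astar c *
                  ((∑ a' : α, b a' z c * g a' c)
                    - ∑ a' : α, ∑ zb : ζ, b a' zb c *
                        ((∑ ω', if A ω' = a ∧ Z ω' = zb ∧ C ω' = c then p ω' else 0)
                          / (∑ ω', if A ω' = a ∧ C ω' = c then p ω' else 0)) * g a' c)
              + ∑ z' : ζ, b a z' c *
                  ((∑ ω', if A ω' = astar ∧ Z ω' = z' ∧ C ω' = c then p ω' else 0)
                    / (∑ ω', if A ω' = astar ∧ C ω' = c then p ω' else 0))) := by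
        exact congrArg₂ (· + ·)
          (group3 A Z C (fun ω => p ω * Y ω) (fun a z c =>
            (∑ ω', if A ω' = astar ∧ Z ω' = z ∧ C ω' = c then p ω' else 0)
                / (∑ ω', if A ω' = astar ∧ C ω' = c then p ω' else 0)
              / ((∑ ω', if A ω' = a ∧ Z ω' = z ∧ C ω' = c then p ω' else 0)
                / (∑ ω', if A ω' = a ∧ C ω' = c then p ω' else 0))))
          (group3 A Z C p (fun a z c =>
            -(b a z c *
                ((∑ ω', if A ω' = astar ∧ Z ω' = z ∧ C ω' = c then p ω' else 0)
                  / (∑ ω', if A ω' = astar ∧ C ω' = c then p ω' else 0)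
                / ((∑ ω', if A ω' = a ∧ Z ω' = z ∧ C ω' = c then p ω' else 0)
                  / (∑ ω', if A ω' = a ∧ C ω' = c then p ω' else 0))))
              + (if a = astar then (1:ℝ) else 0) / g astar c *
                  ((∑ a' : α, b a' z c * g a' c)
                    - ∑ a' : α, ∑ zb : ζ, b a' zb c *
                        ((∑ ω', if A ω' = a ∧ Z ω' = zb ∧ C ω' = c then p ω' else 0)
                          / (∑ ω', if A ω' = a ∧ C ω' = c then p ω' else 0)) * g a' c)
              + ∑ z' : ζ, b a z' c *
                  ((∑ ω', if A ω' = astar ∧ Z ω' = z' ∧ C ω' = c then p ω' else 0)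
                    / (∑ ω', if A ω' = astar ∧ C ω' = c then p ω' else 0))))
    _ = ∑ c : γ, ∑ a : α, ∑ z : ζ,
          ((∑ ω, if A ω = a ∧ Z ω = z ∧ C ω = c then p ω * Y ω else 0) *
            ((∑ ω', if A ω' = astar ∧ Z ω' = z ∧ C ω' = c then p ω' else 0)
                / (∑ ω', if A ω' = astar ∧ C ω' = c then p ω' else 0)
              / ((∑ ω', if A ω' = a ∧ Z ω' = z ∧ C ω' = c then p ω' else 0)
                / (∑ ω', if A ω' = a ∧ C ω' = c then p ω' else 0)))
          + (∑ ω, if A ω = a ∧ Z ω = z ∧ C ω = c then p ω else 0) *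
            (-(b a z c *
                ((∑ ω', if A ω' = astar ∧ Z ω' = z ∧ C ω' = c then p ω' else 0)
                  / (∑ ω', if A ω' = astar ∧ C ω' = c then p ω' else 0)
                / ((∑ ω', if A ω' = a ∧ Z ω' = z ∧ C ω' = c then p ω' else 0)
                  / (∑ ω', if A ω' = a ∧ C ω' = c then p ω' else 0))))
              + (if a = astar then (1:ℝ) else 0) / g astar c *
                  ((∑ a' : α, b a' z c * g a' c)
                    - ∑ a' : α, ∑ zb : ζ, b a' zb c *
                        ((∑ ω', if A ω' = a ∧ Z ω' = zb ∧ C ω' = c then p ω' else 0)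
                          / (∑ ω', if A ω' = a ∧ C ω' = c then p ω' else 0)) * g a' c)
              + ∑ z' : ζ, b a z' c *
                  ((∑ ω', if A ω' = astar ∧ Z ω' = z' ∧ C ω' = c then p ω' else 0)
                    / (∑ ω', if A ω' = astar ∧ C ω' = c then p ω' else 0)))) := by
        simp only [← Finset.sum_add_distrib]
    _ = ∑ z : ζ, ∑ c : γ,
          (∑ ω', if A ω' = astar ∧ Z ω' = z ∧ C ω' = c then p ω' else 0)
              / (∑ ω', if A ω' = astar ∧ C ω' = c then p ω' else 0)
            * ∑ a : α,
                (∑ ω, if A ω = a ∧ Z ω = z ∧ C ω = c then p ω * Y ω else 0)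
                    / (∑ ω, if A ω = a ∧ Z ω = z ∧ C ω = c then p ω else 0)
                  * ((∑ ω, if A ω = a ∧ C ω = c then p ω else 0)
                      / (∑ ω, if C ω = c then p ω else 0))
                  * (∑ ω, if C ω = c then p ω else 0) :=
        core (fun a z c => ∑ ω, if A ω = a ∧ Z ω = z ∧ C ω = c then p ω else 0)
          (fun a z c => ∑ ω, if A ω = a ∧ Z ω = z ∧ C ω = c then p ω * Y ω else 0)
          (fun a c => ∑ ω, if A ω = a ∧ C ω = c then p ω else 0)
          (fun c => ∑ ω, if C ω = c then p ω else 0)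
          b g astar hP0 hR0 hS0 hRz
    _ = ∑ z : ζ, ∑ c : γ,
          cpr p (fun ω => Z ω = z) (fun ω => A ω = astar ∧ C ω = c)
            * ∑ a : α,
                cex p Y (fun ω => A ω = a ∧ Z ω = z ∧ C ω = c)
                  * cpr p (fun ω => A ω = a) (fun ω => C ω = c)
                  * pr p (fun ω => C ω = c) := by
        refine Finset.sum_congr rfl fun z _ => Finset.sum_congr rfl fun c _ => ?_
        rw [hcprZ]
        refine congrArg _ (Finset.sum_congr rfl fun a _ => ?_)
        rw [hcex, hcprA, hprC]
end
end

section
/- For the linear structural models Z = β₀ + β₁A + ε_z and Y = θ₀ + θ₁A + θ₂Z + ε_y with E[ε_z | A] = 0 and E[ε_y | A, Z] = 0, the front-door functional satisfies Ψ = E[Y] + θ₂β₁(a* − E[A]), so PIIE(a*) = E[Y] − Ψ = θ₂β₁(E[A] − a*). -/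
open Finset
open scoped Classical BigOperators

noncomputable section

open FrontDoor

/-- For the linear structural models `Z = β₀ + β₁A + ε_z` and
`Y = θ₀ + θ₁A + θ₂Z + ε_y` with `E[ε_z | A] = 0` and `E[ε_y | A, Z] = 0`, the
(C-free) front-door functional `Ψ = Σ_z Pr(Z=z|A=a*) Σ_a E[Y|A=a,Z=z] Pr(A=a)`
satisfies `Ψ = E[Y] + θ₂β₁(a* − E[A])`, hence
`PIIE(a*) = E[Y] − Ψ = θ₂β₁(E[A] − a*)`. -/
theorem frontdoor_linear_sem
    {Ω : Type*} [Fintype Ω]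
    (p : Ω → ℝ) (hp0 : ∀ ω, 0 ≤ p ω) (hp1 : ∑ ω, p ω = 1)
    (A Z Y εz εy : Ω → ℝ) (β0 β1 θ0 θ1 θ2 : ℝ) (astar : ℝ)
    -- structural equations
    (hZ : ∀ ω, Z ω = β0 + β1 * A ω + εz ω)
    (hY : ∀ ω, Y ω = θ0 + θ1 * A ω + θ2 * Z ω + εy ω)
    -- mean-zero structural errors
    (hεz : ∀ a : ℝ, pr p (fun ω => A ω = a) ≠ 0 →
      cex p εz (fun ω => A ω = a) = 0)
    (hεy : ∀ a z : ℝ, pr p (fun ω => A ω = a ∧ Z ω = z) ≠ 0 →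
      cex p εy (fun ω => A ω = a ∧ Z ω = z) = 0)
    -- positivity
    (hastar : 0 < pr p (fun ω => A ω = astar))
    (hposAZ : ∀ a ∈ Finset.univ.image A, ∀ z ∈ Finset.univ.image Z,
      0 < pr p (fun ω => A ω = a ∧ Z ω = z)) :
    (∑ z ∈ Finset.univ.image Z,
        cpr p (fun ω => Z ω = z) (fun ω => A ω = astar)
          * ∑ a ∈ Finset.univ.image A,
              cex p Y (fun ω => A ω = a ∧ Z ω = z) * pr p (fun ω => A ω = a))
        = ex p Y + θ2 * β1 * (astar - ex p A)
      ∧ ex p Y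
          - (∑ z ∈ Finset.univ.image Z,
              cpr p (fun ω => Z ω = z) (fun ω => A ω = astar)
                * ∑ a ∈ Finset.univ.image A,
                    cex p Y (fun ω => A ω = a ∧ Z ω = z) * pr p (fun ω => A ω = a))
          = θ2 * β1 * (ex p A - astar) := by
  classical
  -- partition lemma
  have partition : ∀ (g h : Ω → ℝ),
      ∑ c ∈ Finset.univ.image g, ∑ ω, (if g ω = c then h ω else 0) = ∑ ω, h ω := by
    intro g h
    rw [Finset.sum_comm]
    refine Finset.sum_congr rfl fun ω _ => ?_
    rw [Finset.sum_ite_eq]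
    simp [Finset.mem_image]
  -- generic numerator lemmas
  have num_eq : ∀ (E : Ω → Prop) (f : Ω → ℝ), pr p E ≠ 0 →
      (∑ ω, if E ω then p ω * f ω else 0) = cex p f E * pr p E := by
    intro E f hE
    simp only [cex]
    rw [div_mul_cancel₀ _ hE]
  have cex_shift : ∀ (E : Ω → Prop) (f g : Ω → ℝ) (c : ℝ), pr p E ≠ 0 →
      (∀ ω, E ω → f ω = c + g ω) →
      cex p f E = c + cex p g E := by
    intro E f g c hE hfg
    simp only [cex]
    have key : (∑ ω, if E ω then p ω * f ω else 0)
        = c * pr p E + ∑ ω, if E ω then p ω * g ω else 0 := by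
      simp only [pr, Finset.mul_sum]
      rw [← Finset.sum_add_distrib]
      refine Finset.sum_congr rfl fun ω _ => ?_
      by_cases h : E ω
      · rw [if_pos h, if_pos h, if_pos h, hfg ω h]; ring
      · simp [h]
    rw [key, add_div, mul_div_assoc, div_self hE, mul_one]
  -- total mass over values of A
  have S1 : ∑ a ∈ Finset.univ.image A, pr p (fun ω => A ω = a) = 1 := by
    simp only [pr]; rw [partition A p]; exact hp1
  -- first moment over values of A
  have S2 : ∑ a ∈ Finset.univ.image A, a * pr p (fun ω => A ω = a) = ex p A := by
    have : ∀ a, a * pr p (fun ω => A ω = a)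
        = ∑ ω, (if A ω = a then p ω * A ω else 0) := by
      intro a
      simp only [pr, Finset.mul_sum]
      refine Finset.sum_congr rfl fun ω _ => ?_
      by_cases h : A ω = a
      · simp [h, mul_comm]
      · simp [h]
    simp only [this]
    rw [partition A (fun ω => p ω * A ω)]; rfl
  -- E[εz] = 0
  have hEεz : ∑ ω, p ω * εz ω = 0 := by
    rw [← partition A (fun ω => p ω * εz ω)]
    refine Finset.sum_eq_zero fun a _ => ?_
    by_cases h : pr p (fun ω => A ω = a) = 0
    · refine Finset.sum_eq_zero fun ω _ => ?_
      by_cases hω : A ω = a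
      · have hz : p ω = 0 := by
          have := (Finset.sum_eq_zero_iff_of_nonneg
            (fun ω _ => by by_cases hh : A ω = a <;> simp [hh, hp0 ω])).mp h ω
            (Finset.mem_univ ω)
          simpa [hω] using this
        simp [hω, hz]
      · simp [hω]
    · rw [num_eq (fun ω => A ω = a) εz h, hεz a h, zero_mul]
  -- numerator of E[εy | A = a, Z = z] vanishes
  have hnumεy : ∀ (a z : ℝ), pr p (fun ω => A ω = a ∧ Z ω = z) ≠ 0 →
      (∑ ω, if A ω = a ∧ Z ω = z then p ω * εy ω else 0) = 0 := by
    intro a z h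
    have h0 := num_eq (fun ω => A ω = a ∧ Z ω = z) εy h
    rw [hεy a z h, zero_mul] at h0
    refine Eq.trans ?_ h0
    exact Finset.sum_congr rfl fun ω _ => by
      by_cases hc : A ω = a ∧ Z ω = z <;> simp [hc]
  -- E[εy] = 0 via double partition
  have hEεy : ∑ ω, p ω * εy ω = 0 := by
    rw [← partition A (fun ω => p ω * εy ω)]
    refine Finset.sum_eq_zero fun a ha => ?_
    have step : ∑ ω, (if A ω = a then p ω * εy ω else 0)
        = ∑ z ∈ Finset.univ.image Z, ∑ ω,
            (if Z ω = z then (if A ω = a then p ω * εy ω else 0) else 0) := by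
      rw [partition Z (fun ω => if A ω = a then p ω * εy ω else 0)]
    rw [step]
    refine Finset.sum_eq_zero fun z hz => ?_
    refine Eq.trans ?_ (hnumεy a z (hposAZ a ha z hz).ne')
    exact Finset.sum_congr rfl fun ω _ => by
      by_cases h1 : A ω = a <;> by_cases h2 : Z ω = z <;> simp [h1, h2]
  -- E[Z] and E[Y]
  have hEZ : ex p Z = β0 + β1 * ex p A := by
    have e1 : ∀ ω, p ω * Z ω = β0 * p ω + β1 * (p ω * A ω) + p ω * εz ω := by
      intro ω; rw [hZ ω]; ring
    simp only [ex, e1, Finset.sum_add_distrib, ← Finset.mul_sum, hp1, hEεz]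
    ring
  have hEY : ex p Y = θ0 + θ1 * ex p A + θ2 * (β0 + β1 * ex p A) := by
    have e1 : ∀ ω, p ω * Y ω
        = θ0 * p ω + θ1 * (p ω * A ω) + θ2 * (p ω * Z ω) + p ω * εy ω := by
      intro ω; rw [hY ω]; ring
    simp only [ex, e1, Finset.sum_add_distrib, ← Finset.mul_sum, hp1, hEεy]
    have h2 : ∑ ω, p ω * Z ω = β0 + β1 * ∑ ω, p ω * A ω := hEZ
    rw [h2]
    ring
  -- conditional expectation of Y given A=a, Z=z
  have hcexY : ∀ a ∈ Finset.univ.image A, ∀ z ∈ Finset.univ.image Z,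
      cex p Y (fun ω => A ω = a ∧ Z ω = z) = θ0 + θ1 * a + θ2 * z := by
    intro a ha z hz
    have hpos := (hposAZ a ha z hz).ne'
    have hfg : ∀ ω, (A ω = a ∧ Z ω = z) →
        Y ω = (θ0 + θ1 * a + θ2 * z) + εy ω := by
      intro ω h
      rw [hY ω, h.1, h.2]
    rw [cex_shift (fun ω => A ω = a ∧ Z ω = z) Y εy (θ0 + θ1 * a + θ2 * z) hpos hfg,
      hεy a z hpos, add_zero]
  -- conditional expectation of Z given A = astar
  have hcexZ : cex p Z (fun ω => A ω = astar) = β0 + β1 * astar := by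
    have hfg : ∀ ω, A ω = astar → Z ω = (β0 + β1 * astar) + εz ω := by
      intro ω h
      rw [hZ ω, h]
    rw [cex_shift (fun ω => A ω = astar) Z εz (β0 + β1 * astar) hastar.ne' hfg,
      hεz astar hastar.ne', add_zero]
  -- inner sum
  have hinner : ∀ z ∈ Finset.univ.image Z,
      (∑ a ∈ Finset.univ.image A,
        cex p Y (fun ω => A ω = a ∧ Z ω = z) * pr p (fun ω => A ω = a))
      = θ0 + θ1 * ex p A + θ2 * z := by
    intro z hz
    have e : ∀ a ∈ Finset.univ.image A,
        cex p Y (fun ω => A ω = a ∧ Z ω = z) * pr p (fun ω => A ω = a)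
        = (θ0 + θ2 * z) * pr p (fun ω => A ω = a)
          + θ1 * (a * pr p (fun ω => A ω = a)) := by
      intro a ha
      rw [hcexY a ha z hz]; ring
    rw [Finset.sum_congr rfl e, Finset.sum_add_distrib, ← Finset.mul_sum,
      ← Finset.mul_sum, S1, S2]
    ring
  -- conditional distribution of Z given A = astar
  have hprZ : ∀ z, pr p (fun ω => Z ω = z ∧ A ω = astar)
      = ∑ ω, (if Z ω = z then (if A ω = astar then p ω else 0) else 0) := by
    intro z
    simp only [pr]
    refine Finset.sum_congr rfl fun ω _ => ?_
    by_cases h1 : Z ω = z <;> by_cases h2 : A ω = astar <;> simp [h1, h2]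
  have T1 : ∑ z ∈ Finset.univ.image Z,
      cpr p (fun ω => Z ω = z) (fun ω => A ω = astar) = 1 := by
    simp only [cpr, hprZ]
    rw [← Finset.sum_div, partition Z (fun ω => if A ω = astar then p ω else 0)]
    have : (∑ ω, if A ω = astar then p ω else 0) = pr p (fun ω => A ω = astar) := by
      simp only [pr]
    rw [this]
    field_simp
  -- second conditional moment identity
  have T2 : ∑ z ∈ Finset.univ.image Z,
      z * cpr p (fun ω => Z ω = z) (fun ω => A ω = astar) = β0 + β1 * astar := by
    have e : ∀ z ∈ Finset.univ.image Z,
        z * cpr p (fun ω => Z ω = z) (fun ω => A ω = astar)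
        = (∑ ω, if Z ω = z then (if A ω = astar then p ω * Z ω else 0) else 0)
            / pr p (fun ω => A ω = astar) := by
      intro z _
      simp only [cpr, hprZ z]
      rw [← mul_div_assoc]
      congr 1
      rw [Finset.mul_sum]
      refine Finset.sum_congr rfl fun ω _ => ?_
      by_cases h1 : Z ω = z <;> by_cases h2 : A ω = astar <;>
        simp [h1, h2, mul_comm]
    rw [Finset.sum_congr rfl e, ← Finset.sum_div,
      partition Z (fun ω => if A ω = astar then p ω * Z ω else 0),
      num_eq (fun ω => A ω = astar) Z hastar.ne', hcexZ]
    field_simp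
  -- assemble
  have hΨ : (∑ z ∈ Finset.univ.image Z,
      cpr p (fun ω => Z ω = z) (fun ω => A ω = astar)
        * ∑ a ∈ Finset.univ.image A,
            cex p Y (fun ω => A ω = a ∧ Z ω = z) * pr p (fun ω => A ω = a))
      = θ0 + θ1 * ex p A + θ2 * (β0 + β1 * astar) := by
    have e : ∀ z ∈ Finset.univ.image Z,
        cpr p (fun ω => Z ω = z) (fun ω => A ω = astar)
          * ∑ a ∈ Finset.univ.image A,
              cex p Y (fun ω => A ω = a ∧ Z ω = z) * pr p (fun ω => A ω = a)
        = (θ0 + θ1 * ex p A) * cpr p (fun ω => Z ω = z) (fun ω => A ω = astar)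
          + θ2 * (z * cpr p (fun ω => Z ω = z) (fun ω => A ω = astar)) := by
      intro z hz
      rw [hinner z hz]; ring
    rw [Finset.sum_congr rfl e, Finset.sum_add_distrib, ← Finset.mul_sum,
      ← Finset.mul_sum, T1, T2]
    ring
  rw [hΨ, hEY]
  constructor <;> ring
end
end

section
/- The two semiparametric representations agree: for finite discrete A, Z, Y, C with positive conditional densities, E[ Y · f(Z|a*,C)/f(Z|A,C) ] = E[ (I(A=a*)/f(a*|C)) · Σ_a E[Y|a,Z,C] f(a|C) ], both equal to the front-door functional Ψ. -/
open Finset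
open scoped Classical BigOperators

noncomputable section

open FrontDoor

namespace FDHelp
variable {Ω α ζ γ : Type*} [Fintype Ω] [Fintype α] [Fintype ζ] [Fintype γ]

lemma pr_congr (p : Ω → ℝ) {E F : Ω → Prop} (h : ∀ ω, E ω ↔ F ω) : pr p E = pr p F := by
  unfold pr
  exact Finset.sum_congr rfl fun ω _ => by simp [h ω]

lemma group (A : Ω → α) (Z : Ω → ζ) (C : Ω → γ) (f : Ω → α → ζ → γ → ℝ) :
    ∑ ω, f ω (A ω) (Z ω) (C ω)
      = ∑ a, ∑ z, ∑ c, ∑ ω, (if A ω = a ∧ Z ω = z ∧ C ω = c then f ω a z c else 0) := by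
  have key : ∀ ω, f ω (A ω) (Z ω) (C ω)
      = ∑ a, ∑ z, ∑ c, (if A ω = a ∧ Z ω = z ∧ C ω = c then f ω a z c else 0) := by
    intro ω
    simp [ite_and, Finset.sum_ite_eq]
  rw [Finset.sum_congr rfl fun ω _ => key ω]
  rw [Finset.sum_comm]
  refine Finset.sum_congr rfl fun a _ => ?_
  rw [Finset.sum_comm]
  refine Finset.sum_congr rfl fun z _ => ?_
  rw [Finset.sum_comm]

end FDHelp

open FDHelp

/-- The two semiparametric representations agree:
`E[Y·f(Z|a*,C)/f(Z|A,C)] = E[(I(A=a*)/f(a*|C))·Σ_a E[Y|a,Z,C] f(a|C)]`,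
and both equal the front-door functional `Ψ`. -/
theorem semiparametric_representations_agree
    {Ω α ζ γ : Type*} [Fintype Ω] [Fintype α] [Fintype ζ] [Fintype γ]
    (p : Ω → ℝ) (hp0 : ∀ ω, 0 ≤ p ω) (hp1 : ∑ ω, p ω = 1)
    (A : Ω → α) (Z : Ω → ζ) (Y : Ω → ℝ) (C : Ω → γ) (astar : α)
    (hposAC : ∀ (a : α) (c : γ), 0 < pr p (fun ω => A ω = a ∧ C ω = c))
    (hposZAC : ∀ (a : α) (z : ζ) (c : γ),
      0 < pr p (fun ω => A ω = a ∧ Z ω = z ∧ C ω = c)) :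
    ex p (fun ω =>
        Y ω * cpr p (fun ω' => Z ω' = Z ω) (fun ω' => A ω' = astar ∧ C ω' = C ω)
          / cpr p (fun ω' => Z ω' = Z ω) (fun ω' => A ω' = A ω ∧ C ω' = C ω))
      = ex p (fun ω =>
          (if A ω = astar then (1 : ℝ) else 0)
              / cpr p (fun ω' => A ω' = astar) (fun ω' => C ω' = C ω)
            * ∑ a : α,
                cex p Y (fun ω' => A ω' = a ∧ Z ω' = Z ω ∧ C ω' = C ω)
                  * cpr p (fun ω' => A ω' = a) (fun ω' => C ω' = C ω))
    ∧ ex p (fun ω =>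
        Y ω * cpr p (fun ω' => Z ω' = Z ω) (fun ω' => A ω' = astar ∧ C ω' = C ω)
          / cpr p (fun ω' => Z ω' = Z ω) (fun ω' => A ω' = A ω ∧ C ω' = C ω))
      = ∑ z : ζ, ∑ c : γ,
          cpr p (fun ω => Z ω = z) (fun ω => A ω = astar ∧ C ω = c)
            * ∑ a : α,
                cex p Y (fun ω => A ω = a ∧ Z ω = z ∧ C ω = c)
                  * cpr p (fun ω => A ω = a) (fun ω => C ω = c)
                  * pr p (fun ω => C ω = c) := by
  classical
  have hΩ : Nonempty Ω := by
    by_contra h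
    rw [not_nonempty_iff] at h
    simp at hp1
  have hα : Nonempty α := ⟨A (Classical.arbitrary Ω)⟩
  set Q3 : α → ζ → γ → ℝ := fun a z c => pr p (fun ω => A ω = a ∧ Z ω = z ∧ C ω = c) with hQ3
  set Q2 : α → γ → ℝ := fun a c => pr p (fun ω => A ω = a ∧ C ω = c) with hQ2
  set Q1 : γ → ℝ := fun c => pr p (fun ω => C ω = c) with hQ1
  set S : α → ζ → γ → ℝ :=
    fun a z c => ∑ ω, if A ω = a ∧ Z ω = z ∧ C ω = c then p ω * Y ω else 0 with hS
  have hQ3pos : ∀ a z c, 0 < Q3 a z c := hposZAC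
  have hQ2pos : ∀ a c, 0 < Q2 a c := hposAC
  have hsum2 : ∀ c, Q1 c = ∑ a, Q2 a c := by
    intro c
    show pr p (fun ω => C ω = c) = ∑ a, pr p (fun ω => A ω = a ∧ C ω = c)
    simp only [pr]
    rw [Finset.sum_comm]
    refine Finset.sum_congr rfl fun ω _ => ?_
    by_cases h : C ω = c <;> simp [h]
  have hQ1pos : ∀ c, 0 < Q1 c := fun c => by
    rw [hsum2 c]
    exact Finset.sum_pos (fun a _ => hQ2pos a c) Finset.univ_nonempty
  have hcprZ : ∀ (a : α) (z : ζ) (c : γ),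
      cpr p (fun ω' => Z ω' = z) (fun ω' => A ω' = a ∧ C ω' = c) = Q3 a z c / Q2 a c := by
    intro a z c
    simp only [cpr, hQ3, hQ2]
    congr 1
    exact pr_congr p fun ω => by tauto
  have hcprA : ∀ (a : α) (c : γ),
      cpr p (fun ω' => A ω' = a) (fun ω' => C ω' = c) = Q2 a c / Q1 c := fun a c => rfl
  have hcex : ∀ (a : α) (z : ζ) (c : γ),
      cex p Y (fun ω' => A ω' = a ∧ Z ω' = z ∧ C ω' = c) = S a z c / Q3 a z c := by
    intro a z c
    simp only [cex, hS, hQ3]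
    congr 1
    refine Finset.sum_congr rfl fun ω _ => ?_
    by_cases h : A ω = a ∧ Z ω = z ∧ C ω = c <;> simp [h]
  -- per-term common value
  have hL : ex p (fun ω =>
        Y ω * cpr p (fun ω' => Z ω' = Z ω) (fun ω' => A ω' = astar ∧ C ω' = C ω)
          / cpr p (fun ω' => Z ω' = Z ω) (fun ω' => A ω' = A ω ∧ C ω' = C ω))
      = ∑ z, ∑ c, ∑ a, S a z c * Q3 astar z c * Q2 a c / (Q2 astar c * Q3 a z c) := by
    simp only [ex, hcprZ]
    have h1 : (∑ ω, p ω * (Y ω * (Q3 astar (Z ω) (C ω) / Q2 astar (C ω))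
          / (Q3 (A ω) (Z ω) (C ω) / Q2 (A ω) (C ω))))
        = ∑ ω, (fun ω (a : α) (z : ζ) (c : γ) =>
            p ω * Y ω * (Q3 astar z c / Q2 astar c / (Q3 a z c / Q2 a c))) ω (A ω) (Z ω) (C ω) := by
      refine Finset.sum_congr rfl fun ω _ => ?_
      ring
    rw [h1, group A Z C (fun ω (a : α) (z : ζ) (c : γ) =>
      p ω * Y ω * (Q3 astar z c / Q2 astar c / (Q3 a z c / Q2 a c)))]
    have h2 : ∀ (a : α) (z : ζ) (c : γ),
        (∑ ω, if A ω = a ∧ Z ω = z ∧ C ω = c then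
            p ω * Y ω * (Q3 astar z c / Q2 astar c / (Q3 a z c / Q2 a c)) else 0)
        = S a z c * Q3 astar z c * Q2 a c / (Q2 astar c * Q3 a z c) := by
      intro a z c
      have h3 : (∑ ω, if A ω = a ∧ Z ω = z ∧ C ω = c then
            p ω * Y ω * (Q3 astar z c / Q2 astar c / (Q3 a z c / Q2 a c)) else 0)
          = S a z c * (Q3 astar z c / Q2 astar c / (Q3 a z c / Q2 a c)) := by
        rw [hS]
        simp only
        rw [Finset.sum_mul]
        refine Finset.sum_congr rfl fun ω _ => ?_
        split_ifs <;> ring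
      rw [h3]
      have n1 := (hQ3pos a z c).ne'
      have n2 := (hQ2pos astar c).ne'
      have n3 := (hQ2pos a c).ne'
      field_simp
    calc (∑ a, ∑ z, ∑ c, ∑ ω, if A ω = a ∧ Z ω = z ∧ C ω = c then
            p ω * Y ω * (Q3 astar z c / Q2 astar c / (Q3 a z c / Q2 a c)) else 0)
        = ∑ a, ∑ z, ∑ c, S a z c * Q3 astar z c * Q2 a c / (Q2 astar c * Q3 a z c) := by
          exact Finset.sum_congr rfl fun a _ => Finset.sum_congr rfl fun z _ =>
            Finset.sum_congr rfl fun c _ => h2 a z c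
      _ = ∑ z, ∑ a, ∑ c, S a z c * Q3 astar z c * Q2 a c / (Q2 astar c * Q3 a z c) :=
          Finset.sum_comm
      _ = ∑ z, ∑ c, ∑ a, S a z c * Q3 astar z c * Q2 a c / (Q2 astar c * Q3 a z c) :=
          Finset.sum_congr rfl fun z _ => Finset.sum_comm
  have hM : ex p (fun ω =>
          (if A ω = astar then (1 : ℝ) else 0)
              / cpr p (fun ω' => A ω' = astar) (fun ω' => C ω' = C ω)
            * ∑ a : α,
                cex p Y (fun ω' => A ω' = a ∧ Z ω' = Z ω ∧ C ω' = C ω)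
                  * cpr p (fun ω' => A ω' = a) (fun ω' => C ω' = C ω))
      = ∑ z, ∑ c, ∑ a, S a z c * Q3 astar z c * Q2 a c / (Q2 astar c * Q3 a z c) := by
    simp only [ex, hcprA, hcex]
    have h1 : (∑ ω, p ω * ((if A ω = astar then (1 : ℝ) else 0) / (Q2 astar (C ω) / Q1 (C ω))
          * ∑ a : α, S a (Z ω) (C ω) / Q3 a (Z ω) (C ω) * (Q2 a (C ω) / Q1 (C ω))))
        = ∑ ω, (fun ω (a : α) (z : ζ) (c : γ) =>
            p ω * ((if a = astar then (1 : ℝ) else 0) / (Q2 astar c / Q1 c)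
              * ∑ a' : α, S a' z c / Q3 a' z c * (Q2 a' c / Q1 c))) ω (A ω) (Z ω) (C ω) := rfl
    rw [h1, group A Z C (fun ω (a : α) (z : ζ) (c : γ) =>
      p ω * ((if a = astar then (1 : ℝ) else 0) / (Q2 astar c / Q1 c)
        * ∑ a' : α, S a' z c / Q3 a' z c * (Q2 a' c / Q1 c)))]
    have h2 : ∀ (a : α) (z : ζ) (c : γ),
        (∑ ω, if A ω = a ∧ Z ω = z ∧ C ω = c then
            p ω * ((if a = astar then (1 : ℝ) else 0) / (Q2 astar c / Q1 c)
              * ∑ a' : α, S a' z c / Q3 a' z c * (Q2 a' c / Q1 c)) else 0)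
        = Q3 a z c * ((if a = astar then (1 : ℝ) else 0) / (Q2 astar c / Q1 c)
              * ∑ a' : α, S a' z c / Q3 a' z c * (Q2 a' c / Q1 c)) := by
      intro a z c
      rw [hQ3]
      simp only [pr]
      rw [Finset.sum_mul]
      refine Finset.sum_congr rfl fun ω _ => ?_
      split_ifs <;> ring
    rw [show (∑ a, ∑ z, ∑ c, ∑ ω, if A ω = a ∧ Z ω = z ∧ C ω = c then
            p ω * ((if a = astar then (1 : ℝ) else 0) / (Q2 astar c / Q1 c)
              * ∑ a' : α, S a' z c / Q3 a' z c * (Q2 a' c / Q1 c)) else 0)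
        = ∑ a, ∑ z, ∑ c, Q3 a z c * ((if a = astar then (1 : ℝ) else 0) / (Q2 astar c / Q1 c)
              * ∑ a' : α, S a' z c / Q3 a' z c * (Q2 a' c / Q1 c)) from
      Finset.sum_congr rfl fun a _ => Finset.sum_congr rfl fun z _ =>
        Finset.sum_congr rfl fun c _ => h2 a z c]
    rw [show (∑ a, ∑ z, ∑ c, Q3 a z c * ((if a = astar then (1 : ℝ) else 0) / (Q2 astar c / Q1 c)
              * ∑ a' : α, S a' z c / Q3 a' z c * (Q2 a' c / Q1 c)))
        = ∑ z, ∑ c, ∑ a, Q3 a z c * ((if a = astar then (1 : ℝ) else 0) / (Q2 astar c / Q1 c)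
              * ∑ a' : α, S a' z c / Q3 a' z c * (Q2 a' c / Q1 c)) from by
      rw [Finset.sum_comm]
      exact Finset.sum_congr rfl fun z _ => Finset.sum_comm]
    refine Finset.sum_congr rfl fun z _ => Finset.sum_congr rfl fun c _ => ?_
    have hcollapse : ∀ a : α,
        Q3 a z c * ((if a = astar then (1 : ℝ) else 0) / (Q2 astar c / Q1 c)
              * ∑ a' : α, S a' z c / Q3 a' z c * (Q2 a' c / Q1 c))
        = if a = astar then Q3 astar z c * ((1 : ℝ) / (Q2 astar c / Q1 c)
              * ∑ a' : α, S a' z c / Q3 a' z c * (Q2 a' c / Q1 c)) else 0 := by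
      intro a
      by_cases h : a = astar <;> simp [h]
    rw [Finset.sum_congr rfl fun a _ => hcollapse a]
    rw [Finset.sum_ite_eq' Finset.univ astar]
    simp only [Finset.mem_univ, if_true]
    rw [Finset.mul_sum, Finset.mul_sum]
    refine Finset.sum_congr rfl fun a _ => ?_
    have n1 := (hQ3pos a z c).ne'
    have n1' := (hQ3pos astar z c).ne'
    have n2 := (hQ2pos astar c).ne'
    have n3 := (hQ2pos a c).ne'
    have n4 := (hQ1pos c).ne'
    field_simp
  have hR : (∑ z : ζ, ∑ c : γ,
          cpr p (fun ω => Z ω = z) (fun ω => A ω = astar ∧ C ω = c)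
            * ∑ a : α,
                cex p Y (fun ω => A ω = a ∧ Z ω = z ∧ C ω = c)
                  * cpr p (fun ω => A ω = a) (fun ω => C ω = c)
                  * pr p (fun ω => C ω = c))
      = ∑ z, ∑ c, ∑ a, S a z c * Q3 astar z c * Q2 a c / (Q2 astar c * Q3 a z c) := by
    simp only [hcprZ, hcex, hcprA]
    refine Finset.sum_congr rfl fun z _ => Finset.sum_congr rfl fun c _ => ?_
    have e : Q1 c = pr p (fun ω => C ω = c) := by rw [hQ1]
    rw [← e, Finset.mul_sum]
    refine Finset.sum_congr rfl fun a _ => ?_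
    have n1 := (hQ3pos a z c).ne'
    have n1' := (hQ3pos astar z c).ne'
    have n2 := (hQ2pos astar c).ne'
    have n3 := (hQ2pos a c).ne'
    have n4 := (hQ1pos c).ne'
    field_simp
  exact ⟨hL.trans hM.symm, hL.trans hR.symm⟩
end
end
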